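/- Let A⁺, A⁻, B⁺, B⁻ be symmetric matrices with A⁻, B⁻ positive definite. Then ‖(A⁻)^{-1/2} A⁺ (A⁻)^{-1/2} - (B⁻)^{-1/2} B⁺ (B⁻)^{-1/2}‖ ≤ ‖(A⁻)^{-1}‖·‖A⁺‖·(‖(B⁻)^{-1}‖·‖B⁻ - A⁻‖ + 2‖(B⁻)^{-1/2}‖·‖B⁻ - A⁻‖^{1/2}) + ‖(B⁻)^{-1}‖·‖A⁺ - B⁺‖. -/

import Mathlib

/-!
Write `S = (A⁻)^{-1/2}`, `T = (B⁻)^{-1/2}`. The difference of congruences splits as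
`S A⁺ S - T B⁺ T = (S - T) A⁺ S + T A⁺ (S - T) + T (A⁺ - B⁺) T`, and
`S - T = S ((B⁻)^{1/2} - (A⁻)^{1/2}) T`. The square-root difference is controlled by
`‖Q - P‖² ≤ ‖Q² - P²‖` for positive semidefinite `P, Q`: if `(Q - P) x = μ x` with `‖x‖ = 1`,
then `μ = ⟪x, Q x⟫ - ⟪x, P x⟫` while `⟪x, (Q² - P²) x⟫ = μ (⟪x, Q x⟫ + ⟪x, P x⟫)`.
Finally `‖T‖ ≤ ‖S‖ + ‖S - T‖` and `‖(A⁻)⁻¹‖ = ‖S‖²`, `‖(B⁻)⁻¹‖ = ‖T‖²`.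
-/

open Matrix

/-- The spectral (ℓ²-operator) norm of a square real matrix. -/
noncomputable def specNorm {n : ℕ} (A : Matrix (Fin n) (Fin n) ℝ) : ℝ :=
  ‖Matrix.toEuclideanCLM (𝕜 := ℝ) A‖

open scoped ComplexOrder in
/-- The square root of a positive semidefinite matrix, as defined in the older Mathlib. -/
noncomputable def Matrix.PosSemidef.sqrt {n : Type*} [Fintype n] [DecidableEq n] {𝕜 : Type*}
    [RCLike 𝕜] {A : Matrix n n 𝕜} (hA : A.PosSemidef) : Matrix n n 𝕜 :=
  (hA.1.eigenvectorUnitary : Matrix n n 𝕜) * diagonal (fun i => ((√(hA.1.eigenvalues i) : ℝ) : 𝕜)) *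
    (star hA.1.eigenvectorUnitary : Matrix n n 𝕜)

open scoped Matrix.Norms.L2Operator MatrixOrder ComplexOrder

lemma norm_mul_mul_sub_mul_mul_le {R : Type*} [NonUnitalNormedRing R] (s t a b : R) :
    ‖s * a * s - t * b * t‖ ≤ ‖s - t‖ * ‖a‖ * (‖s‖ + ‖t‖) + ‖t‖ * ‖a - b‖ * ‖t‖ := by
  have h : s * a * s - t * b * t = (s - t) * a * s + t * a * (s - t) + t * (a - b) * t := by
    noncomm_ring
  rw [h]
  refine (norm_add₃_le ..).trans ?_
  have h₁ : ‖(s - t) * a * s‖ ≤ ‖s - t‖ * ‖a‖ * ‖s‖ := norm_mul₃_le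
  have h₂ : ‖t * a * (s - t)‖ ≤ ‖t‖ * ‖a‖ * ‖s - t‖ := norm_mul₃_le
  have h₃ : ‖t * (a - b) * t‖ ≤ ‖t‖ * ‖a - b‖ * ‖t‖ := norm_mul₃_le
  linarith

namespace Matrix

variable {m : Type*} [Fintype m] [DecidableEq m]

lemma abs_dotProduct_mulVec_le (M : Matrix m m ℝ) (x : EuclideanSpace ℝ m) :
    |x.ofLp ⬝ᵥ M *ᵥ x.ofLp| ≤ ‖M‖ * ‖x‖ ^ 2 := by
  have h : x.ofLp ⬝ᵥ M *ᵥ x.ofLp = inner ℝ x ((EuclideanSpace.equiv m ℝ).symm (M *ᵥ x.ofLp)) := by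
    rw [EuclideanSpace.inner_eq_star_dotProduct, dotProduct_comm]; rfl
  rw [h]
  calc _ ≤ ‖x‖ * ‖(EuclideanSpace.equiv m ℝ).symm (M *ᵥ x.ofLp)‖ := abs_real_inner_le_norm _ _
    _ ≤ ‖x‖ * (‖M‖ * ‖x‖) := by gcongr; exact l2_opNorm_mulVec M x
    _ = ‖M‖ * ‖x‖ ^ 2 := by ring

lemma sq_le_norm_mul_self_sub_mul_self_of_mulVec_eq {P Q : Matrix m m ℝ} (hP : P.PosSemidef)
    (hQ : Q.PosSemidef) {μ : ℝ} {x : EuclideanSpace ℝ m} (hx : ‖x‖ = 1)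
    (hμ : (Q - P) *ᵥ x.ofLp = μ • x.ofLp) : μ ^ 2 ≤ ‖Q * Q - P * P‖ := by
  set v := x.ofLp
  have hvv : v ⬝ᵥ v = 1 := by
    rw [← one_pow 2, ← hx, ← real_inner_self_eq_norm_sq, EuclideanSpace.inner_eq_star_dotProduct]
    rfl
  have hvecMul : v ᵥ* (Q - P) = μ • v := by
    rw [← (hQ.1.sub hP.1).eq, conjTranspose_eq_transpose_of_trivial, vecMul_transpose, hμ]
  set a := v ⬝ᵥ P *ᵥ v
  set b := v ⬝ᵥ Q *ᵥ v
  have ha : 0 ≤ a := by simpa using hP.dotProduct_mulVec_nonneg v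
  have hb : 0 ≤ b := by simpa using hQ.dotProduct_mulVec_nonneg v
  have hμab : μ = b - a := by
    rw [← mul_one μ, ← hvv, ← smul_eq_mul, ← dotProduct_smul, ← hμ, sub_mulVec, dotProduct_sub]
  have hquad : v ⬝ᵥ (Q * Q - P * P) *ᵥ v = μ * (a + b) := by
    have : Q * Q - P * P = Q * (Q - P) + (Q - P) * P := by noncomm_ring
    rw [this, add_mulVec, dotProduct_add, ← mulVec_mulVec, ← mulVec_mulVec, hμ, mulVec_smul,
      dotProduct_smul, dotProduct_mulVec v (Q - P), hvecMul, smul_dotProduct, smul_eq_mul,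
      smul_eq_mul]
    ring
  have hnorm := abs_dotProduct_mulVec_le (Q * Q - P * P) x
  rw [hquad, hx, one_pow, mul_one, abs_mul, abs_of_nonneg (add_nonneg ha hb)] at hnorm
  calc μ ^ 2 = μ * (b - a) := by rw [← hμab, sq]
    _ ≤ |μ| * |b - a| := by rw [← abs_mul]; exact le_abs_self _
    _ ≤ |μ| * (a + b) := by gcongr; exact abs_sub_le_iff.2 ⟨by linarith, by linarith⟩
    _ ≤ ‖Q * Q - P * P‖ := hnorm

lemma norm_sub_le_sqrt_norm_mul_self_sub_mul_self {P Q : Matrix m m ℝ} (hP : P.PosSemidef)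
    (hQ : Q.PosSemidef) : ‖Q - P‖ ≤ √‖Q * Q - P * P‖ := by
  have hD : (Q - P).IsHermitian := hQ.1.sub hP.1
  rw [← cfc_id' ℝ (Q - P) hD.isSelfAdjoint]
  refine norm_cfc_le (Real.sqrt_nonneg _) fun μ hμ => ?_
  rw [hD.spectrum_real_eq_range_eigenvalues] at hμ
  obtain ⟨i, rfl⟩ := hμ
  rw [Real.norm_eq_abs, ← Real.sqrt_sq_eq_abs]
  exact Real.sqrt_le_sqrt <| sq_le_norm_mul_self_sub_mul_self_of_mulVec_eq hP hQ
    (hD.eigenvectorBasis.orthonormal.1 i) (hD.mulVec_eigenvectorBasis i)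

lemma PosSemidef.sqrt_eq_cfcSqrt {𝕜 : Type*} [RCLike 𝕜] {A : Matrix m m 𝕜} (hA : A.PosSemidef) :
    hA.sqrt = CFC.sqrt A := by
  rw [CFC.sqrt_eq_cfc, cfc_nnreal_eq_real _ A, hA.1.cfc_eq]
  simp only [IsHermitian.cfc, Matrix.PosSemidef.sqrt]
  congr
  ext i
  simp [max_eq_left (hA.eigenvalues_nonneg i)]

lemma PosSemidef.norm_inv_eq_norm_inv_cfcSqrt_sq {𝕜 : Type*} [RCLike 𝕜] {A : Matrix m m 𝕜}
    (hA : A.PosSemidef) : ‖A⁻¹‖ = ‖(CFC.sqrt A)⁻¹‖ ^ 2 := by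
  conv_lhs => rw [← CFC.sqrt_mul_sqrt_self A hA.nonneg, mul_inv_rev]
  exact (CFC.sqrt_nonneg A).posSemidef.1.inv.isSelfAdjoint.norm_mul_self

lemma PosDef.norm_inv_cfcSqrt_sub_inv_cfcSqrt_le {A B : Matrix m m ℝ} (hA : A.PosDef)
    (hB : B.PosDef) :
    ‖(CFC.sqrt A)⁻¹ - (CFC.sqrt B)⁻¹‖ ≤ ‖(CFC.sqrt A)⁻¹‖ * √‖B - A‖ * ‖(CFC.sqrt B)⁻¹‖ := by
  have hunit : IsUnit (CFC.sqrt A) ↔ IsUnit (CFC.sqrt B) :=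
    iff_of_true ((CFC.isUnit_sqrt_iff A hA.posSemidef.nonneg).2 hA.isUnit)
      ((CFC.isUnit_sqrt_iff B hB.posSemidef.nonneg).2 hB.isUnit)
  rw [inv_sub_inv hunit]
  refine norm_mul₃_le.trans ?_
  gcongr
  simpa only [CFC.sqrt_mul_sqrt_self A hA.posSemidef.nonneg,
    CFC.sqrt_mul_sqrt_self B hB.posSemidef.nonneg] using
    norm_sub_le_sqrt_norm_mul_self_sub_mul_self (CFC.sqrt_nonneg A).posSemidef
      (CFC.sqrt_nonneg B).posSemidef

end Matrix

lemma specNorm_eq_norm {n : ℕ} (A : Matrix (Fin n) (Fin n) ℝ) : specNorm A = ‖A‖ := rfl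

theorem congruence_perturbation_bound_two_general {n : ℕ}
    (Ap Am Bp Bm : Matrix (Fin n) (Fin n) ℝ)
    (hAm : Am.PosDef) (hBm : Bm.PosDef) :
    specNorm ((hAm.posSemidef.sqrt)⁻¹ * Ap * (hAm.posSemidef.sqrt)⁻¹
        - (hBm.posSemidef.sqrt)⁻¹ * Bp * (hBm.posSemidef.sqrt)⁻¹)
      ≤ specNorm Am⁻¹ * specNorm Ap *
          (specNorm Bm⁻¹ * specNorm (Bm - Am)
            + 2 * specNorm ((hBm.posSemidef.sqrt)⁻¹) * Real.sqrt (specNorm (Bm - Am)))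
        + specNorm Bm⁻¹ * specNorm (Ap - Bp) := by
  simp only [specNorm_eq_norm, hAm.posSemidef.sqrt_eq_cfcSqrt, hBm.posSemidef.sqrt_eq_cfcSqrt,
    hAm.posSemidef.norm_inv_eq_norm_inv_cfcSqrt_sq, hBm.posSemidef.norm_inv_eq_norm_inv_cfcSqrt_sq]
  set S := (CFC.sqrt Am)⁻¹
  set T := (CFC.sqrt Bm)⁻¹
  set r := √‖Bm - Am‖
  have hr : ‖Bm - Am‖ = r ^ 2 := (Real.sq_sqrt (norm_nonneg _)).symm
  have hdiff : ‖S - T‖ ≤ ‖S‖ * r * ‖T‖ := hAm.norm_inv_cfcSqrt_sub_inv_cfcSqrt_le hBm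
  have hT : ‖T‖ ≤ ‖S‖ + ‖S - T‖ := by simpa only [norm_sub_rev] using norm_le_insert' T S
  have hsum : ‖S - T‖ * (‖S‖ + ‖T‖) ≤ ‖S‖ ^ 2 * (‖T‖ ^ 2 * r ^ 2 + 2 * ‖T‖ * r) :=
    calc _ ≤ ‖S - T‖ * (2 * ‖S‖ + ‖S - T‖) :=
          mul_le_mul_of_nonneg_left (by linarith) (norm_nonneg _)
      _ ≤ (‖S‖ * r * ‖T‖) * (2 * ‖S‖ + ‖S‖ * r * ‖T‖) := by gcongr
      _ = _ := by ring
  rw [hr]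
  calc _ ≤ ‖S - T‖ * ‖Ap‖ * (‖S‖ + ‖T‖) + ‖T‖ * ‖Ap - Bp‖ * ‖T‖ :=
        norm_mul_mul_sub_mul_mul_le _ _ _ _
    _ ≤ _ := by nlinarith [mul_le_mul_of_nonneg_left hsum (norm_nonneg Ap)]

/-- Second inequality of Proposition `normcmcpcm_cmecpecme`: for symmetric `A⁺, B⁺`
and positive definite `A⁻, B⁻`,
`‖(A⁻)^{-1/2} A⁺ (A⁻)^{-1/2} - (B⁻)^{-1/2} B⁺ (B⁻)^{-1/2}‖ ≤
  ‖(A⁻)^{-1}‖ ‖A⁺‖ (‖(B⁻)^{-1}‖ ‖B⁻ - A⁻‖ + 2‖(B⁻)^{-1/2}‖ ‖B⁻ - A⁻‖^{1/2})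
  + ‖(B⁻)^{-1}‖ ‖A⁺ - B⁺‖`. -/
theorem congruence_perturbation_bound_two {n : ℕ}
    (Ap Am Bp Bm : Matrix (Fin n) (Fin n) ℝ)
    (hAp : Ap.IsSymm) (hBp : Bp.IsSymm) (hAm : Am.PosDef) (hBm : Bm.PosDef) :
    specNorm ((hAm.posSemidef.sqrt)⁻¹ * Ap * (hAm.posSemidef.sqrt)⁻¹
        - (hBm.posSemidef.sqrt)⁻¹ * Bp * (hBm.posSemidef.sqrt)⁻¹)
      ≤ specNorm Am⁻¹ * specNorm Ap *
          (specNorm Bm⁻¹ * specNorm (Bm - Am)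
            + 2 * specNorm ((hBm.posSemidef.sqrt)⁻¹) * Real.sqrt (specNorm (Bm - Am)))
        + specNorm Bm⁻¹ * specNorm (Ap - Bp) :=
  congruence_perturbation_bound_two_general Ap Am Bp Bm hAm hBm
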